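/- arXiv:2410.04857 — 2 statements merged into one kernel-verified Lean document; each statement's English description precedes it below -/
import Mathlib

section
/- For a prime p and integers i ≥ 0, j ≥ 1, the p-adic valuation of (p^i(p^j−1))! / ((p^j−1)!)^{p^i} equals (p^i − 1)·j. -/
/-!
Legendre's formula `(p - 1) v_p(n!) = n - s_p(n)`, with `s_p` the base-`p` digit sum, reduces the
claim to digit sums: multiplying by `p ^ i` only prepends zero digits, so `s_p(p ^ i n) = s_p(n)`,
and `p ^ j - 1` has `j` digits, all equal to `p - 1`. Hence
`(p - 1) (v_p((p ^ i n)!) - p ^ i v_p(n!)) = (p ^ i - 1) s_p(n) = (p - 1) (p ^ i - 1) j`.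
-/

open Nat

namespace Nat

theorem digits_pow_sub_one {b : ℕ} (hb : 1 < b) (j : ℕ) :
    b.digits (b ^ j - 1) = List.replicate j (b - 1) := by
  induction j with
  | zero => simp
  | succ j ih =>
    have hpow : 1 ≤ b ^ j := Nat.one_le_pow j b (by omega)
    have hsplit : b ^ (j + 1) - 1 = (b - 1) + b * (b ^ j - 1) := by
      zify [hpow, hb.le, Nat.one_le_pow (j + 1) b (by omega)]
      ring
    rw [hsplit, Nat.digits_add b hb _ _ (by omega) (Or.inl (by omega)), ih, List.replicate_succ]

theorem digits_sum_pow_sub_one {b : ℕ} (hb : 1 < b) (j : ℕ) :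
    (b.digits (b ^ j - 1)).sum = j * (b - 1) := by
  rw [digits_pow_sub_one hb, List.sum_replicate, smul_eq_mul]

theorem factorial_pow_dvd_factorial_mul (m n : ℕ) : n ! ^ m ∣ (m * n)! := by
  rcases eq_or_ne n 0 with rfl | hn
  · simp
  · exact ⟨uniformBell m n * m !, by rw [← uniformBell_mul_eq m hn]; ring⟩

end Nat

variable {p : ℕ} [Fact p.Prime]

theorem sub_one_mul_padicValNat_factorial_pow_mul (k n : ℕ) :
    (p - 1) * padicValNat p (p ^ k * n)! =
      p ^ k * ((p - 1) * padicValNat p n !) + (p ^ k - 1) * (p.digits n).sum := by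
  rcases eq_or_ne n 0 with rfl | hn
  · simp
  have hp : 1 < p := (Fact.out : p.Prime).one_lt
  have hdigits : (p.digits (p ^ k * n)).sum = (p.digits n).sum := by
    simp [Nat.digits_base_pow_mul hp (Nat.pos_of_ne_zero hn)]
  have hsum := Nat.digit_sum_le p n
  have hpow : 1 ≤ p ^ k := Nat.one_le_pow k p (by omega)
  rw [sub_one_mul_padicValNat_factorial, sub_one_mul_padicValNat_factorial, hdigits]
  zify [hsum, hpow, hsum.trans (Nat.le_mul_of_pos_left n hpow)]
  ring

theorem padicValNat_factorial_mul_div_factorial_pow (m n : ℕ) :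
    padicValNat p ((m * n)! / n ! ^ m) = padicValNat p (m * n)! - m * padicValNat p n ! := by
  rw [padicValNat.div_of_dvd (Nat.factorial_pow_dvd_factorial_mul m n), padicValNat.pow]

theorem stmt1_general (p i j : ℕ) (hp : p.Prime) :
    padicValNat p ((p ^ i * (p ^ j - 1)).factorial / ((p ^ j - 1).factorial) ^ (p ^ i))
      = (p ^ i - 1) * j := by
  have : Fact p.Prime := ⟨hp⟩
  apply Nat.eq_of_mul_eq_mul_left (Nat.sub_pos_of_lt hp.one_lt)
  rw [padicValNat_factorial_mul_div_factorial_pow, Nat.mul_sub,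
    sub_one_mul_padicValNat_factorial_pow_mul, Nat.digits_sum_pow_sub_one hp.one_lt,
    mul_left_comm, Nat.add_sub_cancel_left]
  ring

/-- For a prime `p` and integers `i ≥ 0`, `j ≥ 1`, the `p`-adic valuation of
`(p^i(p^j−1))! / ((p^j−1)!)^(p^i)` equals `(p^i − 1)·j`. -/
theorem stmt1 (p i j : ℕ) (hp : p.Prime) (hj : 1 ≤ j) :
    padicValNat p ((p ^ i * (p ^ j - 1)).factorial / ((p ^ j - 1).factorial) ^ (p ^ i))
      = (p ^ i - 1) * j :=
  stmt1_general p i j hp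
end

section
/- Let U be a Δ-regular Lucas sequence and suppose there is a prime p > l with p ∤ Q whose rank of appearance in U equals l. Then for every j ≥ 0, the l-Lucasnomial Catalan number C_{U,l}(n) with n = l·p^j − 1 is not an integer. -/
/-!
Let `c = v_p(U_l)`. Since `p ∤ Q` has rank `l`, `p ∣ U_m ↔ l ∣ m`; as `p > l ≥ 2`, `p` is odd.
Writing `U_{kl} = U_l · U(a,b)_k` with `(a,b) = (V_l, Q^l)`, whose discriminant
`a² - 4b = Δ U_l²` is divisible by `p²`, the congruence `2^k U(a,b)_k ≡ 2k a^{k-1} (mod a² - 4b)`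
lifts the exponent: `v_p(U_{kl}) = c + v_p(k)`. Summing, `v_p(m!_U) = ⌊m/l⌋ c + v_p(⌊m/l⌋!)`.
For `n = l p^j - 1`, Legendre's formula then shows that `v_p` of `U_{n+1}^l (n!_U)^{l+1}`
exceeds `v_p(((l+1)n)!_U)` by exactly `c ≥ 1`, so the former cannot divide the latter.
-/

/-- The Lucas sequence `U(P,Q)`: `U_0 = 0`, `U_1 = 1`, `U_{n+2} = P·U_{n+1} − Q·U_n`. -/
def lucasU (P Q : ℤ) : ℕ → ℤ
  | 0 => 0
  | 1 => 1
  | n + 2 => P * lucasU P Q (n + 1) - Q * lucasU P Q n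

/-- The generalized factorial `n!_U = U_n U_{n−1} ⋯ U_1`. -/
def lucasFact (P Q : ℤ) (n : ℕ) : ℤ := ∏ i ∈ Finset.range n, lucasU P Q (i + 1)

open scoped Nat

section Identities

variable (P Q : ℤ)

@[simp] lemma lucasU_zero : lucasU P Q 0 = 0 := rfl

@[simp] lemma lucasU_one : lucasU P Q 1 = 1 := rfl

lemma lucasU_add_two (n : ℕ) :
    lucasU P Q (n + 2) = P * lucasU P Q (n + 1) - Q * lucasU P Q n := rfl

@[simp] lemma lucasU_two : lucasU P Q 2 = P := by simp [lucasU_add_two]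

lemma lucasU_add (m n : ℕ) :
    lucasU P Q (m + n + 1) =
      lucasU P Q (m + 1) * lucasU P Q (n + 1) - Q * lucasU P Q m * lucasU P Q n := by
  induction n generalizing m with
  | zero => simp
  | succ n ih =>
    rw [show m + (n + 1) + 1 = (m + 1) + n + 1 by omega, ih, lucasU_add_two P Q m,
      lucasU_add_two P Q n]
    ring

lemma lucasU_succ_sq_sub (n : ℕ) :
    lucasU P Q (n + 1) ^ 2 - P * lucasU P Q (n + 1) * lucasU P Q n + Q * lucasU P Q n ^ 2 =
      Q ^ n := by
  induction n with
  | zero => simp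
  | succ n ih =>
    rw [lucasU_add_two, pow_succ Q n, ← ih]
    ring

/-- The companion Lucas sequence `V_n = αⁿ + βⁿ`, where `α, β` are the roots of `X² - P X + Q`. -/
def lucasV (n : ℕ) : ℤ := 2 * lucasU P Q (n + 1) - P * lucasU P Q n

lemma lucasV_sq_sub (n : ℕ) :
    lucasV P Q n ^ 2 - 4 * Q ^ n = (P ^ 2 - 4 * Q) * lucasU P Q n ^ 2 := by
  rw [lucasV]
  linear_combination 4 * lucasU_succ_sq_sub P Q n

variable {P Q} in
lemma sq_dvd_lucasV_sq_sub_of_dvd {d : ℤ} {n : ℕ} (h : d ∣ lucasU P Q n) :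
    d ^ 2 ∣ lucasV P Q n ^ 2 - 4 * Q ^ n :=
  lucasV_sq_sub P Q n ▸ (pow_dvd_pow_of_dvd h 2).mul_left _

lemma lucasU_add_two_mul (m n : ℕ) :
    lucasU P Q (m + 2 * n) = lucasV P Q n * lucasU P Q (m + n) - Q ^ n * lucasU P Q m := by
  induction m using Nat.twoStepInduction with
  | zero =>
    cases n with
    | zero => simp
    | succ n =>
      rw [show 0 + 2 * (n + 1) = (n + 1) + n + 1 by omega, lucasU_add, zero_add, lucasV,
        lucasU_add_two, lucasU_zero]
      ring
  | one =>
    rw [show 1 + 2 * n = n + n + 1 by omega, lucasU_add, add_comm 1 n, lucasV, lucasU_one]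
    linear_combination -lucasU_succ_sq_sub P Q n
  | more m ih₀ ih₁ =>
    rw [show m + 2 + 2 * n = (m + 2 * n) + 2 by omega, lucasU_add_two,
      show m + 2 * n + 1 = m + 1 + 2 * n by omega, ih₀, ih₁,
      show m + 2 + n = (m + n) + 2 by omega, lucasU_add_two P Q (m + n),
      show m + 1 + n = m + n + 1 by omega, lucasU_add_two P Q m]
    ring

lemma lucasU_mul (n k : ℕ) :
    lucasU P Q (k * n) = lucasU P Q n * lucasU (lucasV P Q n) (Q ^ n) k := by
  induction k using Nat.twoStepInduction with
  | zero => simp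
  | one => simp
  | more k ih₀ ih₁ =>
    rw [show (k + 2) * n = k * n + 2 * n by ring, lucasU_add_two_mul,
      show k * n + n = (k + 1) * n by ring, ih₀, ih₁, lucasU_add_two]
    ring

lemma discr_dvd_two_pow_mul_lucasU_sub (n : ℕ) :
    P ^ 2 - 4 * Q ∣ 2 ^ (n + 1) * lucasU P Q (n + 1) - 2 * (n + 1) * P ^ n := by
  induction n using Nat.twoStepInduction with
  | zero => simp
  | one => exact ⟨0, by simp⟩
  | more n ih₀ ih₁ =>
    obtain ⟨s, hs⟩ := ih₀
    obtain ⟨t, ht⟩ := ih₁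
    refine ⟨2 * P * t - 4 * Q * s + 2 * (n + 1) * P ^ n, ?_⟩
    rw [lucasU_add_two]
    push_cast at hs ht ⊢
    linear_combination 2 * P * ht - 4 * Q * hs

end Identities

lemma lucasFact_ne_zero {P Q : ℤ} (hreg : ∀ n : ℕ, 1 ≤ n → lucasU P Q n ≠ 0) (m : ℕ) :
    lucasFact P Q m ≠ 0 :=
  Finset.prod_ne_zero_iff.mpr fun i _ => hreg (i + 1) i.succ_pos

section Valuations

variable {p : ℕ} [hp : Fact p.Prime]

lemma padicValInt_pow (a : ℤ) (n : ℕ) : padicValInt p (a ^ n) = n * padicValInt p a := by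
  rw [padicValInt, Int.natAbs_pow, padicValNat.pow, padicValInt]

lemma padicValInt_le_of_dvd {a b : ℤ} (hb : b ≠ 0) (h : a ∣ b) :
    padicValInt p a ≤ padicValInt p b :=
  ((padicValInt_dvd_iff _ b).mp ((padicValInt_dvd a).trans h)).resolve_left hb

lemma padicValNat_factorial_mul_pow_sub {a b : ℕ} (ha : 0 < a) (hap : a ≤ p) (hb : 0 < b)
    (hbp : b ≤ p) (j : ℕ) :
    padicValNat p (a * p ^ j - b)! + j = a * ∑ i ∈ Finset.range j, p ^ i := by
  induction j generalizing b with
  | zero =>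
    rw [pow_zero, mul_one,
      padicValNat.eq_zero_of_not_dvd ((hp.out.dvd_factorial).not.mpr (by omega))]
    simp
  | succ j ih =>
    obtain ⟨x, hx⟩ : ∃ x, a * p ^ j = x + 1 :=
      Nat.exists_eq_succ_of_ne_zero (Nat.mul_pos ha (pow_pos hp.out.pos j)).ne'
    have hsplit : a * p ^ (j + 1) - b = p * (a * p ^ j - 1) + (p - b) := by
      rw [pow_succ, show a * (p ^ j * p) = p * (a * p ^ j) by ring, hx,
        Nat.add_sub_cancel, mul_add, mul_one]
      omega
    have ih₁ := ih Nat.one_pos hp.out.one_le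
    rw [hsplit, padicValNat_factorial_mul_add _ (by omega), padicValNat_factorial_mul,
      Finset.sum_range_succ, mul_add, ← ih₁]
    omega

end Valuations

section PrimeDivisors

variable {P Q : ℤ} {p : ℕ} [hp : Fact p.Prime]

lemma natCast_not_dvd_two_of_ne_two (hp2 : p ≠ 2) : ¬ (p : ℤ) ∣ 2 := by
  rw [show (2 : ℤ) = (2 : ℕ) from rfl, Int.natCast_dvd_natCast,
    Nat.prime_dvd_prime_iff_eq hp.out Nat.prime_two]
  exact hp2

lemma not_dvd_lucasU_succ_of_dvd (hpQ : ¬ (p : ℤ) ∣ Q) {m : ℕ} (hm : (p : ℤ) ∣ lucasU P Q m) :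
    ¬ (p : ℤ) ∣ lucasU P Q (m + 1) := by
  induction m with
  | zero =>
    rw [zero_add, lucasU_one]
    exact (Nat.prime_iff_prime_int.mp hp.out).not_dvd_one
  | succ m ih =>
    intro hm₁
    have hQU : (p : ℤ) ∣ Q * lucasU P Q m := by
      have := lucasU_add_two P Q m
      rw [show Q * lucasU P Q m = P * lucasU P Q (m + 1) - lucasU P Q (m + 2) by linarith]
      exact dvd_sub (hm.mul_left P) hm₁
    rcases (Nat.prime_iff_prime_int.mp hp.out).dvd_mul.mp hQU with h | h
    · exact hpQ h
    · exact ih h hm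

lemma not_dvd_lucasV_of_dvd_lucasU (hp2 : p ≠ 2) (hpQ : ¬ (p : ℤ) ∣ Q) {n : ℕ}
    (hn : (p : ℤ) ∣ lucasU P Q n) : ¬ (p : ℤ) ∣ lucasV P Q n := by
  intro hV
  have h4Q : (p : ℤ) ∣ 2 ^ 2 * Q ^ n := by
    rw [show (2 : ℤ) ^ 2 * Q ^ n = lucasV P Q n ^ 2 - (P ^ 2 - 4 * Q) * lucasU P Q n ^ 2 by
      linear_combination -lucasV_sq_sub P Q n]
    exact dvd_sub (dvd_pow hV two_ne_zero) ((dvd_pow hn two_ne_zero).mul_left _)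
  have hpZ := Nat.prime_iff_prime_int.mp hp.out
  rcases hpZ.dvd_mul.mp h4Q with h | h
  · exact natCast_not_dvd_two_of_ne_two hp2 (hpZ.dvd_of_dvd_pow h)
  · exact hpQ (hpZ.dvd_of_dvd_pow h)

lemma not_dvd_lucasU_of_not_dvd {a b : ℤ} (hp2 : p ≠ 2) (ha : ¬ (p : ℤ) ∣ a)
    (hD : (p : ℤ) ∣ a ^ 2 - 4 * b) {k : ℕ} (hk : ¬ p ∣ k) : ¬ (p : ℤ) ∣ lucasU a b k := by
  obtain ⟨n, rfl⟩ : ∃ n, k = n + 1 := Nat.exists_eq_succ_of_ne_zero (by rintro rfl; simp at hk)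
  intro hU
  have hpZ := Nat.prime_iff_prime_int.mp hp.out
  have h : (p : ℤ) ∣ 2 * (n + 1) * a ^ n := by
    have := hD.trans (discr_dvd_two_pow_mul_lucasU_sub a b n)
    simpa using (dvd_sub_right (hU.mul_left _)).mp this
  rcases hpZ.dvd_mul.mp h with h | h
  · rcases hpZ.dvd_mul.mp h with h | h
    · exact natCast_not_dvd_two_of_ne_two hp2 h
    · exact hk (by exact_mod_cast h)
  · exact ha (hpZ.dvd_of_dvd_pow h)

lemma exists_lucasU_prime_eq_mul_not_dvd {a b : ℤ} (hp2 : p ≠ 2) (ha : ¬ (p : ℤ) ∣ a)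
    (hD : (p : ℤ) ^ 2 ∣ a ^ 2 - 4 * b) :
    ∃ u : ℤ, lucasU a b p = p * u ∧ ¬ (p : ℤ) ∣ u := by
  have hpZ := Nat.prime_iff_prime_int.mp hp.out
  have h := hD.trans (discr_dvd_two_pow_mul_lucasU_sub a b (p - 1))
  rw [Nat.sub_add_cancel hp.out.one_le, Nat.cast_pred hp.out.pos, sub_add_cancel] at h
  obtain ⟨u, hu⟩ : (p : ℤ) ∣ lucasU a b p := by
    have h2 : (p : ℤ) ∣ 2 ^ p * lucasU a b p :=
      (dvd_sub_left ⟨2 * a ^ (p - 1), by ring⟩).mp ((dvd_pow_self _ two_ne_zero).trans h)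
    exact (hpZ.dvd_mul.mp h2).resolve_left
      fun h => natCast_not_dvd_two_of_ne_two hp2 (hpZ.dvd_of_dvd_pow h)
  refine ⟨u, hu, fun hu' => ?_⟩
  rw [hu, show (2 : ℤ) ^ p * (p * u) - 2 * p * a ^ (p - 1) = p * (2 ^ p * u - 2 * a ^ (p - 1)) by
    ring, pow_two, mul_dvd_mul_iff_left (by exact_mod_cast hp.out.ne_zero)] at h
  have h2a : (p : ℤ) ∣ 2 * a ^ (p - 1) := (dvd_sub_right (hu'.mul_left _)).mp h
  rcases hpZ.dvd_mul.mp h2a with h | h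
  · exact natCast_not_dvd_two_of_ne_two hp2 h
  · exact ha (hpZ.dvd_of_dvd_pow h)

end PrimeDivisors

/-- `l = ρ_U(p)`, the rank of appearance of `p` in `U(P,Q)`. -/
structure IsRankOfAppearance (P Q : ℤ) (p l : ℕ) : Prop where
  pos : 0 < l
  dvd : (p : ℤ) ∣ lucasU P Q l
  not_dvd_of_lt : ∀ m : ℕ, 0 < m → m < l → ¬ (p : ℤ) ∣ lucasU P Q m

namespace IsRankOfAppearance

variable {P Q : ℤ} {p l : ℕ}

lemma dvd_lucasU_mul (hrk : IsRankOfAppearance P Q p l) (k : ℕ) :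
    (p : ℤ) ∣ lucasU P Q (k * l) := by
  rw [lucasU_mul]
  exact hrk.dvd.mul_right _

variable [hp : Fact p.Prime]

lemma one_lt (hrk : IsRankOfAppearance P Q p l) : 1 < l := by
  refine lt_of_le_of_ne hrk.pos fun h => ?_
  have h1 := hrk.dvd
  rw [← h, lucasU_one] at h1
  exact (Nat.prime_iff_prime_int.mp hp.out).not_dvd_one h1

lemma dvd_lucasU_iff (hrk : IsRankOfAppearance P Q p l) (hpQ : ¬ (p : ℤ) ∣ Q) (m : ℕ) :
    (p : ℤ) ∣ lucasU P Q m ↔ l ∣ m := by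
  refine ⟨fun hm => ?_, fun ⟨k, hk⟩ => hk ▸ mul_comm k l ▸ hrk.dvd_lucasU_mul k⟩
  by_contra hlm
  obtain ⟨r, hr⟩ : ∃ r, m % l = r + 1 :=
    Nat.exists_eq_succ_of_ne_zero fun h => hlm (Nat.dvd_of_mod_eq_zero h)
  have hql : (p : ℤ) ∣ lucasU P Q (m / l * l) := hrk.dvd_lucasU_mul _
  -- `U_m = U_{ql+1} U_{r+1} - Q U_{ql} U_r`, and `p ∤ U_{ql+1}` since `p ∣ U_{ql}`.
  have hA := lucasU_add P Q (m / l * l) r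
  rw [show m / l * l + r + 1 = m by have := Nat.div_add_mod m l; rw [mul_comm]; omega] at hA
  have hUr : (p : ℤ) ∣ lucasU P Q (m / l * l + 1) * lucasU P Q (r + 1) :=
    (dvd_sub_left ((hql.mul_left Q).mul_right _)).mp (hA ▸ hm)
  rcases (Nat.prime_iff_prime_int.mp hp.out).dvd_mul.mp hUr with h | h
  · exact not_dvd_lucasU_succ_of_dvd hpQ hql h
  · exact hrk.not_dvd_of_lt (r + 1) r.succ_pos (hr ▸ Nat.mod_lt m hrk.pos) h

lemma exists_lucasU_mul_eq (hrk : IsRankOfAppearance P Q p l) (hp2 : p ≠ 2)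
    (hpQ : ¬ (p : ℤ) ∣ Q) {k : ℕ} (hk : k ≠ 0) :
    ∃ w : ℤ, lucasU P Q (k * l) = lucasU P Q l * p ^ padicValNat p k * w ∧ ¬ (p : ℤ) ∣ w := by
  induction k using Nat.strong_induction_on with
  | _ k ih =>
  by_cases hpk : p ∣ k
  · obtain ⟨m, rfl⟩ := hpk
    have hm : m ≠ 0 := right_ne_zero_of_mul hk
    obtain ⟨w, hw, hpw⟩ := ih m (lt_mul_left (Nat.pos_of_ne_zero hm) hp.out.one_lt) hm
    have hml : (p : ℤ) ∣ lucasU P Q (m * l) := hrk.dvd_lucasU_mul m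
    obtain ⟨u, hu, hpu⟩ := exists_lucasU_prime_eq_mul_not_dvd hp2
      (not_dvd_lucasV_of_dvd_lucasU hp2 hpQ hml) (sq_dvd_lucasV_sq_sub_of_dvd hml)
    refine ⟨w * u, ?_, fun h => ((Nat.prime_iff_prime_int.mp hp.out).dvd_mul.mp h).elim hpw hpu⟩
    rw [mul_assoc, lucasU_mul, hu, hw, padicValNat.mul hp.out.ne_zero hm,
      padicValNat.self hp.out.one_lt]
    ring
  · refine ⟨lucasU (lucasV P Q l) (Q ^ l) k, ?_, ?_⟩
    · rw [lucasU_mul, padicValNat.eq_zero_of_not_dvd hpk, pow_zero, mul_one]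
    · exact not_dvd_lucasU_of_not_dvd hp2 (not_dvd_lucasV_of_dvd_lucasU hp2 hpQ hrk.dvd)
        ((dvd_pow_self _ two_ne_zero).trans (sq_dvd_lucasV_sq_sub_of_dvd hrk.dvd)) hpk

lemma padicValInt_lucasU_mul (hrk : IsRankOfAppearance P Q p l) (hp2 : p ≠ 2)
    (hpQ : ¬ (p : ℤ) ∣ Q) (hU : lucasU P Q l ≠ 0) {k : ℕ} (hk : k ≠ 0) :
    padicValInt p (lucasU P Q (k * l)) = padicValInt p (lucasU P Q l) + padicValNat p k := by
  obtain ⟨w, hw, hpw⟩ := hrk.exists_lucasU_mul_eq hp2 hpQ hk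
  have hw0 : w ≠ 0 := by rintro rfl; simp at hpw
  have hpk0 : (p : ℤ) ^ padicValNat p k ≠ 0 := pow_ne_zero _ (by exact_mod_cast hp.out.ne_zero)
  rw [hw, padicValInt.mul (mul_ne_zero hU hpk0) hw0, padicValInt.mul hU hpk0,
    padicValInt.eq_zero_of_not_dvd hpw, ← Nat.cast_pow, padicValInt.of_nat,
    padicValNat.prime_pow, add_zero]

lemma padicValInt_lucasFact (hrk : IsRankOfAppearance P Q p l) (hp2 : p ≠ 2)
    (hpQ : ¬ (p : ℤ) ∣ Q) (hreg : ∀ n : ℕ, 1 ≤ n → lucasU P Q n ≠ 0) (m : ℕ) :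
    padicValInt p (lucasFact P Q m) =
      m / l * padicValInt p (lucasU P Q l) + padicValNat p (m / l)! := by
  induction m with
  | zero => simp [lucasFact]
  | succ m ih =>
    rw [lucasFact, Finset.prod_range_succ, ← lucasFact,
      padicValInt.mul (lucasFact_ne_zero hreg m) (hreg _ m.succ_pos), ih]
    by_cases hlm : l ∣ m + 1
    · have hq : (m + 1) / l = m / l + 1 := Nat.succ_div_of_dvd hlm
      have hU : lucasU P Q (m + 1) = lucasU P Q ((m / l + 1) * l) := by
        rw [← hq, Nat.div_mul_cancel hlm]
      rw [hU, hq, hrk.padicValInt_lucasU_mul hp2 hpQ (hreg l hrk.pos) (m / l).succ_ne_zero,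
        Nat.factorial_succ, padicValNat.mul (m / l).succ_ne_zero (Nat.factorial_ne_zero _)]
      ring
    · rw [Nat.succ_div_of_not_dvd hlm,
        padicValInt.eq_zero_of_not_dvd (mt (hrk.dvd_lucasU_iff hpQ _).mp hlm), add_zero]

end IsRankOfAppearance

section Arithmetic

variable {l M : ℕ}

lemma two_le_succ_mul (hl : 1 ≤ l) (hM : 1 ≤ M) : 2 ≤ (l + 1) * M :=
  Nat.mul_le_mul (by omega : 2 ≤ l + 1) hM

lemma mul_sub_one_div (hl : 1 ≤ l) (hM : 1 ≤ M) : (l * M - 1) / l = M - 1 := by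
  have : 1 ≤ l * M := Nat.mul_le_mul hl hM
  apply Nat.div_eq_of_lt_le <;> zify [hM, this] <;> nlinarith

lemma succ_mul_mul_sub_one_div (hl : 1 ≤ l) (hM : 1 ≤ M) :
    (l + 1) * (l * M - 1) / l = (l + 1) * M - 2 := by
  have : 1 ≤ l * M := Nat.mul_le_mul hl hM
  apply Nat.div_eq_of_lt_le <;> zify [this, two_le_succ_mul hl hM] <;> nlinarith

end Arithmetic

theorem stmt16_general (P Q : ℤ) (l : ℕ) (hl : 1 ≤ l)
    (hreg : ∀ n : ℕ, 1 ≤ n → lucasU P Q n ≠ 0)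
    (p : ℕ) (hp : p.Prime) (hpl : l < p)
    (hpQ : ¬ (p : ℤ) ∣ Q) (hrank : (p : ℤ) ∣ lucasU P Q l)
    (hrankmin : ∀ m : ℕ, 0 < m → m < l → ¬ (p : ℤ) ∣ lucasU P Q m) :
    ∀ j : ℕ,
      ¬ (lucasU P Q (l * p ^ j - 1 + 1) ^ l * (lucasFact P Q (l * p ^ j - 1)) ^ (l + 1) ∣
          lucasFact P Q ((l + 1) * (l * p ^ j - 1))) := by
  intro j hdvd
  have : Fact p.Prime := ⟨hp⟩
  have hrk : IsRankOfAppearance P Q p l := ⟨hl, hrank, hrankmin⟩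
  have hp2 : p ≠ 2 := by have := hrk.one_lt; omega
  have hM : 1 ≤ p ^ j := Nat.one_le_pow _ _ hp.pos
  have hlM : 1 ≤ l * p ^ j := Nat.mul_pos hl hM
  have hLegendre : padicValNat p ((l + 1) * p ^ j - 2)! + j =
      (l + 1) * (padicValNat p (p ^ j - 1)! + j) := by
    rw [padicValNat_factorial_mul_pow_sub (by omega) hpl two_pos (by omega),
      ← one_mul (p ^ j), padicValNat_factorial_mul_pow_sub one_pos hp.one_le one_pos hp.one_le,
      one_mul]
  have hc : 0 < padicValInt p (lucasU P Q l) :=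
    ((padicValInt_dvd_iff 1 _).mp (by simpa using hrank)).resolve_left (hreg l hl)
  have hU : padicValInt p (lucasU P Q (l * p ^ j)) = padicValInt p (lucasU P Q l) + j := by
    rw [mul_comm, hrk.padicValInt_lucasU_mul hp2 hpQ (hreg l hl) (by omega),
      padicValNat.prime_pow]
  have hval := padicValInt_le_of_dvd (p := p) (lucasFact_ne_zero hreg _) hdvd
  rw [padicValInt.mul (pow_ne_zero _ (hreg _ (by omega)))
      (pow_ne_zero _ (lucasFact_ne_zero hreg _)), padicValInt_pow, padicValInt_pow,
    Nat.sub_add_cancel hlM, hU, hrk.padicValInt_lucasFact hp2 hpQ hreg,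
    hrk.padicValInt_lucasFact hp2 hpQ hreg, mul_sub_one_div hl hM,
    succ_mul_mul_sub_one_div hl hM] at hval
  generalize padicValNat p (p ^ j - 1)! = B at hval hLegendre
  generalize padicValNat p ((l + 1) * p ^ j - 2)! = A at hval hLegendre
  generalize padicValInt p (lucasU P Q l) = c at hval hc
  zify [hM, two_le_succ_mul hl hM] at hval hLegendre
  linarith

/-- If there is a prime `p > l`, `p ∤ Q`, of rank `l` in the Δ-regular Lucas sequence `U`,
then for every `j ≥ 0`, the `l`-Lucasnomial Catalan number `C_{U,l}(n)` with
`n = l·p^j − 1` is not an integer. -/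
theorem stmt16 (P Q : ℤ) (l : ℕ) (hl : 1 ≤ l) (hP : P ≠ 0) (hQ : Q ≠ 0)
    (hcop : IsCoprime P Q) (hreg : ∀ n : ℕ, 1 ≤ n → lucasU P Q n ≠ 0)
    (hΔ : P ^ 2 - 4 * Q ≠ 0) (p : ℕ) (hp : p.Prime) (hpl : l < p)
    (hpQ : ¬ (p : ℤ) ∣ Q) (hrank : (p : ℤ) ∣ lucasU P Q l)
    (hrankmin : ∀ m : ℕ, 0 < m → m < l → ¬ (p : ℤ) ∣ lucasU P Q m) :
    ∀ j : ℕ,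
      ¬ (lucasU P Q (l * p ^ j - 1 + 1) ^ l * (lucasFact P Q (l * p ^ j - 1)) ^ (l + 1) ∣
          lucasFact P Q ((l + 1) * (l * p ^ j - 1))) :=
  stmt16_general P Q l hl hreg p hp hpl hpQ hrank hrankmin
end
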